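/- arXiv:2004.13202 — 6 statements merged into one kernel-verified Lean document; each statement's English description precedes it below -/
import Mathlib

section
/- Let i₁ < i₂ < i₃, j₁ < j₂ < j₃, k₁ < k₂ < k₃ be real numbers. For α, β, γ ∈ {1,2}, let H(α,β,γ) be the axis-parallel box [i_α, i_{α+1}] × [j_β, j_{β+1}] × [k_γ, k_{γ+1}] in ℝ³. Then for any plane h in ℝ³, there exist α*, β*, γ* ∈ {1,2} such that h does not intersect the interior of H(α*,β*,γ*). -/
lemma coord_choice (A u₁ u₂ u₃ : ℝ) (h₁ : u₁ < u₂) (h₂ : u₂ < u₃) :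
    ∃ a₁ a₂ : ℝ, ((a₁, a₂) = (u₁, u₂) ∨ (a₁, a₂) = (u₂, u₃)) ∧
      ∀ x ∈ Set.Ioo a₁ a₂, A * u₂ ≤ A * x ∧ (A ≠ 0 → A * u₂ < A * x) := by
  rcases le_or_gt 0 A with hA | hA
  · refine ⟨u₂, u₃, Or.inr rfl, fun x hx => ?_⟩
    constructor
    · exact mul_le_mul_of_nonneg_left hx.1.le hA
    · intro hA0
      have : 0 < A := lt_of_le_of_ne hA (Ne.symm hA0)
      nlinarith [hx.1]
  · refine ⟨u₁, u₂, Or.inl rfl, fun x hx => ?_⟩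
    have : A * u₂ < A * x := by nlinarith [hx.2]
    exact ⟨this.le, fun _ => this⟩

/-- For a 3×3×3 grid of boxes determined by i₁<i₂<i₃, j₁<j₂<j₃, k₁<k₂<k₃,
any plane misses the interior of one of the 8 boxes. -/
theorem plane_misses_some_box (i₁ i₂ i₃ j₁ j₂ j₃ k₁ k₂ k₃ : ℝ)
    (hi₁ : i₁ < i₂) (hi₂ : i₂ < i₃) (hj₁ : j₁ < j₂) (hj₂ : j₂ < j₃)
    (hk₁ : k₁ < k₂) (hk₂ : k₂ < k₃)
    (A B C D : ℝ) (hABC : ¬(A = 0 ∧ B = 0 ∧ C = 0)) :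
    ∃ a₁ a₂ b₁ b₂ c₁ c₂ : ℝ,
      ((a₁, a₂) = (i₁, i₂) ∨ (a₁, a₂) = (i₂, i₃)) ∧
      ((b₁, b₂) = (j₁, j₂) ∨ (b₁, b₂) = (j₂, j₃)) ∧
      ((c₁, c₂) = (k₁, k₂) ∨ (c₁, c₂) = (k₂, k₃)) ∧
      ∀ x ∈ Set.Ioo a₁ a₂, ∀ y ∈ Set.Ioo b₁ b₂, ∀ z ∈ Set.Ioo c₁ c₂,
        A * x + B * y + C * z + D ≠ 0 := by
  set p := A * i₂ + B * j₂ + C * k₂ + D with hp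
  rcases le_or_gt 0 p with hp0 | hp0
  · obtain ⟨a₁, a₂, ha, hfa⟩ := coord_choice A i₁ i₂ i₃ hi₁ hi₂
    obtain ⟨b₁, b₂, hb, hfb⟩ := coord_choice B j₁ j₂ j₃ hj₁ hj₂
    obtain ⟨c₁, c₂, hc, hfc⟩ := coord_choice C k₁ k₂ k₃ hk₁ hk₂
    refine ⟨a₁, a₂, b₁, b₂, c₁, c₂, ha, hb, hc, fun x hx y hy z hz h => ?_⟩
    obtain ⟨hax, hax'⟩ := hfa x hx
    obtain ⟨hby, hby'⟩ := hfb y hy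
    obtain ⟨hcz, hcz'⟩ := hfc z hz
    have hne : A ≠ 0 ∨ B ≠ 0 ∨ C ≠ 0 := by tauto
    rcases hne with h0 | h0 | h0
    · nlinarith [hax' h0]
    · nlinarith [hby' h0]
    · nlinarith [hcz' h0]
  · obtain ⟨a₁, a₂, ha, hfa⟩ := coord_choice (-A) i₁ i₂ i₃ hi₁ hi₂
    obtain ⟨b₁, b₂, hb, hfb⟩ := coord_choice (-B) j₁ j₂ j₃ hj₁ hj₂
    obtain ⟨c₁, c₂, hc, hfc⟩ := coord_choice (-C) k₁ k₂ k₃ hk₁ hk₂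
    refine ⟨a₁, a₂, b₁, b₂, c₁, c₂, ha, hb, hc, fun x hx y hy z hz h => ?_⟩
    have hax := (hfa x hx).1
    have hby := (hfb y hy).1
    have hcz := (hfc z hz).1
    nlinarith
end

section
/- Let B ⊆ S be a subset of a finite set S with |B| = N, let f : S → ℝ, and let 0 < δ < 1. Suppose B is not δ-stable, meaning: there is no interval I ⊆ ℝ with |{x ∈ B : f(x) ∈ I}| ≥ (1−δ)N and |{x ∈ S \ B : f(x) ∈ I}| ≤ δN. Assume f is injective. Then there exist three pairwise disjoint intervals I₁, I₂, I₃ appearing in this left-to-right order such that |{x ∈ B : f(x) ∈ I₁}| ≥ δN/2, |{x ∈ B : f(x) ∈ I₃}| ≥ δN/2, and |{x ∈ S \ B : f(x) ∈ I₂}| > δN. -/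
/-!
Let `T = f '' B` and `m = ⌈δN/2⌉`. Take `a` to be the `m`-th smallest and `b` the `m`-th largest
point of `T`, and put `I₁ = (-∞, a]`, `I₂ = (a, b)`, `I₃ = [b, ∞)`. Each outer interval contains
`m` images of `B`, and `[a, b]` misses at most `2(m - 1) < δN` of them, so by instability `[a, b]`
contains more than `δN` images of points outside `B`. Since `a, b ∈ f '' B` and `f` is injective,
all of these lie in the open interval `(a, b)`.
-/

open Set

namespace Set

variable {β : Type*} [LinearOrder β] {s : Set β}

theorem Finite.exists_ncard_inter_Iio_eq (hs : s.Finite) {k : ℕ} (hk : k < s.ncard) :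
    ∃ a ∈ s, (s ∩ Iio a).ncard = k := by
  set e := hs.toFinset.orderEmbOfFin rfl
  have hrange : range e = s := by simp [e, Finset.range_orderEmbOfFin]
  let i : Fin hs.toFinset.card := ⟨k, by rwa [← ncard_eq_toFinset_card s hs]⟩
  refine ⟨e i, hrange.subset (mem_range_self i), ?_⟩
  have himage : s ∩ Iio (e i) = e '' Iio i := by
    ext x
    simp only [← hrange, mem_inter_iff, mem_range, mem_Iio, mem_image]
    constructor
    · rintro ⟨⟨j, rfl⟩, hj⟩
      exact ⟨j, e.lt_iff_lt.mp hj, rfl⟩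
    · rintro ⟨j, hj, rfl⟩
      exact ⟨⟨j, rfl⟩, e.lt_iff_lt.mpr hj⟩
  rw [himage, ncard_image_of_injective _ e.injective, ← Finset.coe_Iio, ncard_coe_finset,
    Fin.card_Iio]

theorem Finite.exists_ncard_inter_Ioi_eq (hs : s.Finite) {k : ℕ} (hk : k < s.ncard) :
    ∃ a ∈ s, (s ∩ Ioi a).ncard = k :=
  Finite.exists_ncard_inter_Iio_eq (β := βᵒᵈ) hs hk

theorem ncard_inter_Iic_of_mem (hs : s.Finite) {a : β} (ha : a ∈ s) :
    (s ∩ Iic a).ncard = (s ∩ Iio a).ncard + 1 := by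
  rw [← Iio_insert, inter_insert_of_mem ha, ncard_insert_of_notMem (by simp) (hs.inter_of_left _)]

theorem ncard_inter_Ici_of_mem (hs : s.Finite) {a : β} (ha : a ∈ s) :
    (s ∩ Ici a).ncard = (s ∩ Ioi a).ncard + 1 :=
  ncard_inter_Iic_of_mem (β := βᵒᵈ) hs ha

theorem ncard_le_ncard_inter_Iio_add_Icc_add_Ioi (hs : s.Finite) (a b : β) :
    s.ncard ≤ (s ∩ Iio a).ncard + (s ∩ Icc a b).ncard + (s ∩ Ioi b).ncard := by
  have hcover : s ⊆ (s ∩ Iio a) ∪ (s ∩ Icc a b) ∪ (s ∩ Ioi b) := by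
    intro x hx
    rcases lt_or_ge x a with hxa | hxa
    · exact .inl (.inl ⟨hx, hxa⟩)
    rcases le_or_gt x b with hxb | hxb
    · exact .inl (.inr ⟨hx, hxa, hxb⟩)
    · exact .inr ⟨hx, hxb⟩
  calc s.ncard ≤ ((s ∩ Iio a) ∪ (s ∩ Icc a b) ∪ (s ∩ Ioi b)).ncard :=
        ncard_le_ncard hcover (by simp [hs.inter_of_left])
    _ ≤ _ := (ncard_union_le _ _).trans (by gcongr; exact ncard_union_le _ _)

theorem Finite.exists_ncard_inter_Iic_eq_ncard_inter_Ici_eq (hs : s.Finite) {m : ℕ}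
    (hm1 : 1 ≤ m) (hm : m ≤ s.ncard) :
    ∃ a ∈ s, ∃ b ∈ s, (s ∩ Iic a).ncard = m ∧ (s ∩ Ici b).ncard = m ∧
      s.ncard + 2 ≤ (s ∩ Icc a b).ncard + 2 * m := by
  obtain ⟨a, ha, hlt⟩ := hs.exists_ncard_inter_Iio_eq (k := m - 1) (by omega)
  obtain ⟨b, hb, hgt⟩ := hs.exists_ncard_inter_Ioi_eq (k := m - 1) (by omega)
  have hcover := ncard_le_ncard_inter_Iio_add_Icc_add_Ioi hs a b
  refine ⟨a, ha, b, hb, ?_, ?_, ?_⟩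
  · rw [ncard_inter_Iic_of_mem hs ha]; omega
  · rw [ncard_inter_Ici_of_mem hs hb]; omega
  · omega

theorem InjOn.ncard_sep_mem_eq {α γ : Type*} {f : α → γ} {B : Set α} (hf : InjOn f B)
    (I : Set γ) : {x ∈ B | f x ∈ I}.ncard = (f '' B ∩ I).ncard := by
  rw [← image_inter_preimage, (hf.mono inter_subset_left).ncard_image]
  rfl

end Set

theorem Function.Injective.sep_compl_mem_Icc_eq_sep_compl_mem_Ioo {α γ : Type*}
    [LinearOrder γ] {f : α → γ} (hf : f.Injective) {B : Set α} {a b : γ} (ha : a ∈ f '' B)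
    (hb : b ∈ f '' B) : {x ∈ Bᶜ | f x ∈ Icc a b} = {x ∈ Bᶜ | f x ∈ Ioo a b} := by
  ext x
  refine and_congr_right fun hx => ⟨fun h => ⟨h.1.lt_of_ne ?_, h.2.lt_of_ne ?_⟩,
    fun h => ⟨h.1.le, h.2.le⟩⟩
  · rintro rfl; exact hx (hf.mem_set_image.mp ha)
  · rintro rfl; exact hx (hf.mem_set_image.mp hb)

theorem unstable_bucket_three_intervals_general {α : Type*}
    (B : Set α) (N : ℕ) (hBcard : B.ncard = N)
    (f : α → ℝ) (hf : Function.Injective f)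
    (δ : ℝ) (hδ1 : δ < 1) (hN : 1 ≤ δ * N / 2)
    (hunstable : ¬ ∃ I : Set ℝ, I.OrdConnected ∧
      (1 - δ) * N ≤ ({x ∈ B | f x ∈ I}.ncard : ℝ) ∧
      ({x ∈ Bᶜ | f x ∈ I}.ncard : ℝ) ≤ δ * N) :
    ∃ I₁ I₂ I₃ : Set ℝ, I₁.OrdConnected ∧ I₂.OrdConnected ∧ I₃.OrdConnected ∧
      (∀ x ∈ I₁, ∀ y ∈ I₂, x < y) ∧ (∀ x ∈ I₂, ∀ y ∈ I₃, x < y) ∧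
      δ * N / 2 ≤ ({x ∈ B | f x ∈ I₁}.ncard : ℝ) ∧
      δ * N / 2 ≤ ({x ∈ B | f x ∈ I₃}.ncard : ℝ) ∧
      δ * N < ({x ∈ Bᶜ | f x ∈ I₂}.ncard : ℝ) := by
  have hN0 : N ≠ 0 := by rintro rfl; norm_num at hN
  set T := f '' B
  have hT : T.Finite := (finite_of_ncard_ne_zero (hBcard ▸ hN0)).image f
  have hTcard : T.ncard = N := by rw [ncard_image_of_injective _ hf, hBcard]
  have hcount (I : Set ℝ) : {x ∈ B | f x ∈ I}.ncard = (T ∩ I).ncard :=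
    hf.injOn.ncard_sep_mem_eq I
  set m := ⌈δ * N / 2⌉₊
  have hm1 : 1 ≤ m := by exact_mod_cast hN.trans (Nat.le_ceil _)
  have hmN : m ≤ N := Nat.ceil_le.mpr (by nlinarith [(N.cast_nonneg : (0 : ℝ) ≤ N)])
  have hm_lt : (m : ℝ) < δ * N / 2 + 1 := Nat.ceil_lt_add_one (by linarith)
  obtain ⟨a, haT, b, hbT, ha, hb, hmid⟩ :=
    hT.exists_ncard_inter_Iic_eq_ncard_inter_Ici_eq hm1 (hTcard ▸ hmN)
  have hgap : δ * N < ({x ∈ Bᶜ | f x ∈ Icc a b}.ncard : ℝ) := by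
    by_contra! h
    refine hunstable ⟨_, ordConnected_Icc, ?_, h⟩
    rw [hcount]
    have : (N : ℝ) + 2 ≤ (T ∩ Icc a b).ncard + 2 * m := by exact_mod_cast hTcard ▸ hmid
    linarith
  refine ⟨Iic a, Ioo a b, Ici b, ordConnected_Iic, ordConnected_Ioo, ordConnected_Ici,
    fun x hx y hy => hx.trans_lt hy.1, fun x hx y hy => hx.2.trans_le hy,
    by rw [hcount, ha]; exact Nat.le_ceil _, by rw [hcount, hb]; exact Nat.le_ceil _,
    hf.sep_compl_mem_Icc_eq_sep_compl_mem_Ioo haT hbT ▸ hgap⟩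

/-- Characterization of unstable buckets (Lemma 4.6). -/
theorem unstable_bucket_three_intervals {α : Type*} [Fintype α]
    (B : Set α) (N : ℕ) (hBcard : B.ncard = N)
    (f : α → ℝ) (hf : Function.Injective f)
    (δ : ℝ) (hδ0 : 0 < δ) (hδ1 : δ < 1) (hN : 1 ≤ δ * N / 2)
    (hunstable : ¬ ∃ I : Set ℝ, I.OrdConnected ∧
      (1 - δ) * N ≤ ({x ∈ B | f x ∈ I}.ncard : ℝ) ∧
      ({x ∈ Bᶜ | f x ∈ I}.ncard : ℝ) ≤ δ * N) :
    ∃ I₁ I₂ I₃ : Set ℝ, I₁.OrdConnected ∧ I₂.OrdConnected ∧ I₃.OrdConnected ∧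
      (∀ x ∈ I₁, ∀ y ∈ I₂, x < y) ∧ (∀ x ∈ I₂, ∀ y ∈ I₃, x < y) ∧
      δ * N / 2 ≤ ({x ∈ B | f x ∈ I₁}.ncard : ℝ) ∧
      δ * N / 2 ≤ ({x ∈ B | f x ∈ I₃}.ncard : ℝ) ∧
      δ * N < ({x ∈ Bᶜ | f x ∈ I₂}.ncard : ℝ) :=
  unstable_bucket_three_intervals_general B N hBcard f hf δ hδ1 hN hunstable
end

section
/- Let J₁, …, J_b be pairwise disjoint nonempty open intervals in ℝ, indexed so that J₁ < J₂ < ⋯ < J_b in left-to-right order. If i, j, k ∈ {1,…,b} are distinct and there exist p ∈ J_i, q ∈ J_j, r ∈ J_k with |p − q| < |p − r|, and also p' ∈ J_i, q' ∈ J_j, r' ∈ J_k with |p' − q'| > |p' − r'|, then J_i lies strictly between J_j and J_k (that is, either j < i < k or k < i < j). -/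
/-- Brittleness forces the first interval to lie strictly between the other two. -/
theorem brittle_middle_interval (b : ℕ) (J : Fin b → Set ℝ)
    (hJ : ∀ t, ∃ a c : ℝ, a < c ∧ J t = Set.Ioo a c)
    (horder : ∀ s t : Fin b, s < t → ∀ x ∈ J s, ∀ y ∈ J t, x < y)
    (i j k : Fin b) (hij : i ≠ j) (hik : i ≠ k) (hjk : j ≠ k)
    (p q r : ℝ) (hp : p ∈ J i) (hq : q ∈ J j) (hr : r ∈ J k)
    (h1 : |p - q| < |p - r|)
    (p' q' r' : ℝ) (hp' : p' ∈ J i) (hq' : q' ∈ J j) (hr' : r' ∈ J k)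
    (h2 : |p' - q'| > |p' - r'|) :
    (j < i ∧ i < k) ∨ (k < i ∧ i < j) := by
  rcases lt_or_gt_of_ne hij with hij' | hij' <;>
  rcases lt_or_gt_of_ne hik with hik' | hik' <;>
  rcases lt_or_gt_of_ne hjk with hjk' | hjk'
  · -- i<j, i<k, j<k : q' < r', p' < q'
    exfalso
    have h3 := horder i j hij' p' hp' q' hq'
    have h4 := horder j k hjk' q' hq' r' hr'
    rw [abs_of_neg (by linarith), abs_of_neg (by linarith)] at h2
    linarith
  · -- i<j, i<k, k<j : r < q, p < r
    exfalso
    have h3 := horder i k hik' p hp r hr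
    have h4 := horder k j hjk' r hr q hq
    rw [abs_of_neg (by linarith), abs_of_neg (by linarith)] at h1
    linarith
  · exact Or.inr ⟨hik', hij'⟩
  · exact Or.inr ⟨hik', hij'⟩
  · exact Or.inl ⟨hij', hik'⟩
  · exact Or.inl ⟨hij', hik'⟩
  · -- j<i, k<i, j<k : q < r < p
    exfalso
    have h3 := horder k i hik' r hr p hp
    have h4 := horder j k hjk' q hq r hr
    rw [abs_of_pos (by linarith), abs_of_pos (by linarith)] at h1
    linarith
  · -- j<i, k<i, k<j : r' < q' < p'
    exfalso
    have h3 := horder j i hij' q' hq' p' hp'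
    have h4 := horder k j hjk' r' hr' q' hq'
    rw [abs_of_pos (by linarith), abs_of_pos (by linarith)] at h2
    linarith
end

section
/- Let v : Fin n → ℝ³ be any map from indices to points and let h = {(x,y,z) ∈ ℝ³ : x − y = z − x} be a plane. For any three families of pairwise disjoint boxes arranged as in Lemma 6.2, among the eight boxes {J_{i+i'} × J_{j+j'} × J_{k+k'} : i',j',k' ∈ {0,1}} formed from three pairs of consecutive disjoint intervals J_i, J_{i+1}, J_j, J_{j+1}, J_k, J_{k+1}, there is at least one box whose interior is disjoint from h. -/
/-- Among the eight boxes formed from three pairs of consecutive disjoint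
intervals, some box's interior misses the plane x - y = z - x (Lemma 6.3). -/
theorem plane_misses_one_of_eight_boxes
    (a₁ a₂ a₃ a₄ b₁ b₂ b₃ b₄ c₁ c₂ c₃ c₄ : ℝ)
    (ha : a₁ < a₂) (ha' : a₂ ≤ a₃) (ha'' : a₃ < a₄)
    (hb : b₁ < b₂) (hb' : b₂ ≤ b₃) (hb'' : b₃ < b₄)
    (hc : c₁ < c₂) (hc' : c₂ ≤ c₃) (hc'' : c₃ < c₄) :
    ∃ I J K : Set ℝ,
      (I = Set.Ioo a₁ a₂ ∨ I = Set.Ioo a₃ a₄) ∧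
      (J = Set.Ioo b₁ b₂ ∨ J = Set.Ioo b₃ b₄) ∧
      (K = Set.Ioo c₁ c₂ ∨ K = Set.Ioo c₃ c₄) ∧
      ∀ x ∈ I, ∀ y ∈ J, ∀ z ∈ K, x - y ≠ z - x := by
  by_cases h : b₂ + c₂ ≤ 2 * a₃
  · refine ⟨Set.Ioo a₃ a₄, Set.Ioo b₁ b₂, Set.Ioo c₁ c₂, Or.inr rfl, Or.inl rfl, Or.inl rfl,
      fun x hx y hy z hz => ?_⟩
    have : y + z < 2 * x := by nlinarith [hx.1, hy.2, hz.2]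
    intro heq; linarith
  · push_neg at h
    refine ⟨Set.Ioo a₁ a₂, Set.Ioo b₃ b₄, Set.Ioo c₃ c₄, Or.inl rfl, Or.inr rfl, Or.inr rfl,
      fun x hx y hy z hz => ?_⟩
    have : 2 * x < y + z := by nlinarith [hx.2, hy.1, hz.1]
    intro heq; linarith
end

section
/- Let f : Fin n → ℝ and let 𝒯 be the complete set of ordinal triples: for all distinct u,v,w, exactly one of (u,v,w), (u,w,v) ∈ 𝒯, determined by whichever is satisfied or chosen arbitrarily when tied. If f is injective and for each triple (u,v,w) ∈ 𝒯 we have |f(u) − f(v)| < |f(u) − f(w)|, then for the point p = argmin f, the relation j ≺ k ⟺ (p, j, k) ∈ 𝒯 is a strict total order on Fin n \ {p}, and j ≺ k iff f(j) < f(k). -/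
/-- Correctness core of the warm-up exact algorithm: when all ordinal
constraints are satisfied, the constraints involving the leftmost point
determine the order of the values of f. -/
theorem leftmost_point_determines_order (n : ℕ) (f : Fin n → ℝ)
    (hf : Function.Injective f)
    (T : Set (Fin n × Fin n × Fin n))
    (hcomplete : ∀ u v w : Fin n, u ≠ v → u ≠ w → v ≠ w →
      ((u, v, w) ∈ T ↔ (u, w, v) ∉ T))
    (hsat : ∀ t ∈ T, |f t.1 - f t.2.1| < |f t.1 - f t.2.2|)
    (p : Fin n) (hp : ∀ i, f p ≤ f i) :
    ∀ j k : Fin n, j ≠ p → k ≠ p → j ≠ k → ((p, j, k) ∈ T ↔ f j < f k) := by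
  intro j k hj hk hjk
  have hpj : f p < f j := lt_of_le_of_ne (hp j) (fun h => hj (hf h.symm))
  have hpk : f p < f k := lt_of_le_of_ne (hp k) (fun h => hk (hf h.symm))
  constructor
  · intro hT
    have := hsat _ hT
    simp only at this
    rw [abs_sub_comm (f p) (f j), abs_sub_comm (f p) (f k),
      abs_of_pos (sub_pos.2 hpj), abs_of_pos (sub_pos.2 hpk)] at this
    linarith
  · intro hlt
    by_contra hnot
    have hT' : (p, k, j) ∈ T :=
      (hcomplete p k j (Ne.symm hk) (Ne.symm hj) (Ne.symm hjk)).2 hnot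
    have := hsat _ hT'
    simp only at this
    rw [abs_sub_comm (f p) (f j), abs_sub_comm (f p) (f k),
      abs_of_pos (sub_pos.2 hpj), abs_of_pos (sub_pos.2 hpk)] at this
    linarith
end

section
/- For the point set X = {0, 2, 4, …, 2k} ∪ {2k+1, 2k+2, …, 3k} on the real line with the complete set of ordinal constraints 𝒯 = {(u,v,w) : |u−v| < |u−w|}, the identity map satisfies all constraints, but the map g sending the i-th smallest point to i violates at least c·k³ constraints for some absolute constant c > 0 and all sufficiently large k. -/
/-!
Write `m = ⌊k / 6⌋`. For `a, b, c < m` take the ranks `u = k - a`, `v = k + 4m + c` and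
`w = k - (2a + 3m + b)`, i.e. the points `2k - 2a`, `2k + 4m + c` and `2k - 4a - 6m - 2b`.
On the line `v` is closer to `u` (`2a + 4m + c < 2a + 6m + 2b`), but `u` and `w` lie among the
even points, whose mutual distances the rank embedding halves, so in ranks `w` is at least as
close (`a + 3m + b ≤ a + 4m + c`). These `m³ ≥ k³ / 1000` triples are pairwise distinct.
-/

/-- The `i`-th smallest point of `{0, 2, …, 2k} ∪ {2k + 1, …, 3k}`. -/
def gappedPoint (k i : ℕ) : ℕ := if i ≤ k then 2 * i else k + i

/-- Triples of ranks `(u, v, w)` with `v` strictly closer to `u` than `w` on the line, but not in ranks. -/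
def violatedTriples (k : ℕ) : Set (Fin (2 * k + 1) × Fin (2 * k + 1) × Fin (2 * k + 1)) :=
  {t ∈ {t : Fin (2 * k + 1) × Fin (2 * k + 1) × Fin (2 * k + 1) |
      (t.1 ≠ t.2.1 ∧ t.1 ≠ t.2.2 ∧ t.2.1 ≠ t.2.2) ∧
      |(gappedPoint k t.1 : ℝ) - gappedPoint k t.2.1| <
        |(gappedPoint k t.1 : ℝ) - gappedPoint k t.2.2|} |
    |((t.1 : ℕ) : ℝ) - ((t.2.1 : ℕ) : ℝ)| ≥ |((t.1 : ℕ) : ℝ) - ((t.2.2 : ℕ) : ℝ)|}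

lemma abs_natCast_sub_natCast (x y : ℕ) : |(x : ℝ) - y| = (((x : ℤ) - y).natAbs : ℝ) := by
  rw [Nat.cast_natAbs]
  push_cast
  rfl

def violatingWitness (k m : ℕ) (p : ℕ × ℕ × ℕ) :
    Fin (2 * k + 1) × Fin (2 * k + 1) × Fin (2 * k + 1) :=
  (Fin.ofNat _ (k - p.1), Fin.ofNat _ (k + 4 * m + p.2.2),
    Fin.ofNat _ (k - (2 * p.1 + 3 * m + p.2.1)))

section Witness

variable {k m c : ℕ}

lemma val_violatingWitness (a b : ℕ) (hmk : 6 * m ≤ k) (hc : c < m) :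
    ((violatingWitness k m (a, b, c)).1 : ℕ) = k - a ∧
      ((violatingWitness k m (a, b, c)).2.1 : ℕ) = k + 4 * m + c ∧
      ((violatingWitness k m (a, b, c)).2.2 : ℕ) = k - (2 * a + 3 * m + b) := by
  simp only [violatingWitness, Fin.val_ofNat]
  refine ⟨Nat.mod_eq_of_lt ?_, Nat.mod_eq_of_lt ?_, Nat.mod_eq_of_lt ?_⟩ <;> omega

lemma violatingWitness_mem {a b : ℕ} (hmk : 6 * m ≤ k) (ha : a < m) (hb : b < m) (hc : c < m) :
    violatingWitness k m (a, b, c) ∈ violatedTriples k := by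
  obtain ⟨hu, hv, hw⟩ := val_violatingWitness a b hmk hc
  simp only [violatedTriples, gappedPoint, Set.mem_ofPred_eq, ne_eq, Fin.ext_iff, hu, hv, hw,
    abs_natCast_sub_natCast, Nat.cast_lt, ge_iff_le, Nat.cast_le]
  rw [if_pos (by omega), if_neg (by omega), if_pos (by omega)]
  omega

lemma violatingWitness_injOn (hmk : 6 * m ≤ k) :
    Set.InjOn (violatingWitness k m) (Set.Iio m ×ˢ Set.Iio m ×ˢ Set.Iio m) := by
  rintro ⟨a, b, c⟩ hp ⟨a', b', c'⟩ hq h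
  simp only [Set.mem_prod, Set.mem_Iio] at hp hq
  obtain ⟨hu, hv, hw⟩ := val_violatingWitness a b hmk hp.2.2
  obtain ⟨hu', hv', hw'⟩ := val_violatingWitness a' b' hmk hq.2.2
  simp only [Prod.ext_iff, Fin.ext_iff, hu, hv, hw, hu', hv', hw'] at h
  simp only [Prod.mk.injEq]
  omega

end Witness

lemma cube_le_ncard_violatedTriples {k m : ℕ} (hmk : 6 * m ≤ k) :
    m ^ 3 ≤ (violatedTriples k).ncard :=
  calc m ^ 3 = (Set.Iio m ×ˢ Set.Iio m ×ˢ Set.Iio m).ncard := by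
        simp only [Set.ncard_prod, Set.ncard_Iio_nat]; ring
    _ ≤ (violatedTriples k).ncard :=
        Set.ncard_le_ncard_of_injOn _ (fun _ hp ↦ violatingWitness_mem hmk hp.1 hp.2.1 hp.2.2)
          (violatingWitness_injOn hmk) (Set.toFinite _)

/-- The ordering of the points alone is not enough: for the point set
{0,2,…,2k} ∪ {2k+1,…,3k}, the identity embedding satisfies all constraints but
the rank embedding violates Ω(k³) constraints. -/
theorem rank_embedding_violates_many :
    ∃ c : ℝ, 0 < c ∧ ∃ K : ℕ, ∀ k : ℕ, K ≤ k →
      ∀ pts : Fin (2 * k + 1) → ℝ,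
        (pts = fun i : Fin (2 * k + 1) => ((if (i : ℕ) ≤ k then 2 * (i : ℕ) else k + (i : ℕ) : ℕ) : ℝ)) →
        ∀ T : Set (Fin (2 * k + 1) × Fin (2 * k + 1) × Fin (2 * k + 1)),
          (T = {t | (t.1 ≠ t.2.1 ∧ t.1 ≠ t.2.2 ∧ t.2.1 ≠ t.2.2) ∧
                |pts t.1 - pts t.2.1| < |pts t.1 - pts t.2.2|}) →
          (∀ t ∈ T, |pts t.1 - pts t.2.1| < |pts t.1 - pts t.2.2|) ∧
          c * (k : ℝ) ^ 3 ≤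
            (({t ∈ T | |((t.1 : ℕ) : ℝ) - ((t.2.1 : ℕ) : ℝ)| ≥
                |((t.1 : ℕ) : ℝ) - ((t.2.2 : ℕ) : ℝ)|}).ncard : ℝ) := by
  refine ⟨1 / 1000, by norm_num, 12, fun k hk pts hpts T hT ↦ ⟨fun t ht ↦ (hT ▸ ht).2, ?_⟩⟩
  subst hpts hT
  have hk : k ^ 3 ≤ 1000 * (k / 6) ^ 3 :=
    calc k ^ 3 ≤ (10 * (k / 6)) ^ 3 := Nat.pow_le_pow_left (by omega) 3
      _ = 1000 * (k / 6) ^ 3 := by ring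
  have hcount : 1000 * (k / 6) ^ 3 ≤ 1000 * (violatedTriples k).ncard :=
    Nat.mul_le_mul_left _ (cube_le_ncard_violatedTriples (Nat.mul_div_le k 6))
  have hreal : (k : ℝ) ^ 3 ≤ 1000 * (violatedTriples k).ncard := by exact_mod_cast hk.trans hcount
  change 1 / 1000 * (k : ℝ) ^ 3 ≤ (violatedTriples k).ncard
  linarith
end
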